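/- Suppose lim_{x→a⁺} s(x) = ∞, the right boundary b is natural (lim_{x→b} s(x)·M[a,x] = ∞ and ∫_{x₀}^{b} M[x₀,v] s(v) dv = ∞), μ extends continuously to x = a with a finite value μ(a), there exists x̂₀ ∈ (a,b) such that μ is strictly increasing on (a, x̂₀) and both c and μ are concave on (x̂₀, b), and there exists x̃ ∈ (a,b) with h(x̃) > γ c̄(b). Let ŷ be the unique maximizer of h on (a,b), and define U(x) = h(ŷ) ξ(x) − γ g(x) for x ∈ (a, ŷ] and U(x) = U(ŷ) + p (x − ŷ) for x ∈ (ŷ, b). Then U is twice continuously differentiable on (a,b), and the pair (U, h(ŷ)) solves the singular-control HJB equation: max{ (σ(x)²/2) U″(x) + μ(x) U′(x) + γ c(x) − h(ŷ), −U′(x) + p } = 0 for all x ∈ (a,b); in particular (σ²/2)U″ + μU′ + γc − h(ŷ) = 0 and U′ ≥ p on (a, ŷ), while U′ = p and (σ²/2)U″ + μU′ + γc − h(ŷ) < 0 on (ŷ, b). -/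

import Mathlib

open MeasureTheory Filter Set Topology
open scoped Classical

noncomputable section

/-- The state interval `(a, b)` where `a` is real and `b ∈ (a, ∞]`. -/
def stInt (a : ℝ) (b : EReal) : Set ℝ := {x : ℝ | a < x ∧ (x : EReal) < b}

/-- The filter of approach to the right endpoint `b ∈ (a, ∞]`:
`atTop` when `b = ∞`, and the left-neighborhood filter of `b` otherwise. -/
def atB (b : EReal) : Filter ℝ :=
  if b = ⊤ then Filter.atTop else nhdsWithin b.toReal (Set.Iio b.toReal)

/-- The scale density `s(x) = exp(-∫_{x₀}^x 2μ/σ²)`. -/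
def sDen (μ σ : ℝ → ℝ) (x₀ x : ℝ) : ℝ :=
  Real.exp (-(∫ y in x₀..x, 2 * μ y / (σ y) ^ 2))

/-- The speed density `m(x) = 2/(σ(x)² s(x))`. -/
def mDen (μ σ : ℝ → ℝ) (x₀ x : ℝ) : ℝ :=
  2 / ((σ x) ^ 2 * sDen μ σ x₀ x)

/-- `M[a,x] = ∫_a^x m(u) du`. -/
def Mab (μ σ : ℝ → ℝ) (x₀ a x : ℝ) : ℝ :=
  ∫ u in Set.Ioo a x, mDen μ σ x₀ u

/-- The time potential `ξ(x) = ∫_{x₀}^x M[a,v] s(v) dv`. -/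
def xiF (μ σ : ℝ → ℝ) (x₀ a x : ℝ) : ℝ :=
  ∫ v in x₀..x, Mab μ σ x₀ a v * sDen μ σ x₀ v

/-- The running reward potential `g(x) = ∫_{x₀}^x (∫_a^v c(u) m(u) du) s(v) dv`. -/
def gF (μ σ c : ℝ → ℝ) (x₀ a x : ℝ) : ℝ :=
  ∫ v in x₀..x, (∫ u in Set.Ioo a v, c u * mDen μ σ x₀ u) * sDen μ σ x₀ v

/-- `h(x) = (∫_a^x (γ c(u) + p μ(u)) m(u) du) / M[a,x]`. -/
def hF (μ σ c : ℝ → ℝ) (x₀ a p γ x : ℝ) : ℝ :=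
  (∫ u in Set.Ioo a x, (γ * c u + p * μ u) * mDen μ σ x₀ u) / Mab μ σ x₀ a x

/-- The long-term average reward `F(w,y)` of the `(w,y)`-impulse policy. -/
def FF (μ σ c : ℝ → ℝ) (x₀ a p K γ w y : ℝ) : ℝ :=
  (p * (y - w) - K + γ * (gF μ σ c x₀ a y - gF μ σ c x₀ a w)) /
    (xiF μ σ x₀ a y - xiF μ σ x₀ a w)

/-- `c̄(b)`: equals `⟨c,π⟩` when `M[a,b] < ∞` and the boundary value `c(b)` otherwise. -/
def cbar (μ σ c : ℝ → ℝ) (x₀ a : ℝ) (b : EReal) (cb : ℝ) : ℝ :=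
  if MeasureTheory.IntegrableOn (mDen μ σ x₀) (stInt a b) MeasureTheory.volume then
    (∫ u in stInt a b, c u * mDen μ σ x₀ u) / (∫ u in stInt a b, mDen μ σ x₀ u)
  else cb


/-! `h = C_ψ / M` with `C_ψ = ∫_a ψ m` and `ψ = γ c + p μ` satisfies `h' = m (ψ - h) / M`. Hence
`ψ(ŷ) = h(ŷ)` at the maximiser `ŷ`, and `h` increases on every interval where `ψ ≥ h(ŷ)`; the
monotonicity of `ψ` before `x̂₀` and its concavity after `x̂₀` would produce such an interval to the
right of `ŷ` as soon as `ψ ≥ h(ŷ)` somewhere there, so `ψ < h(ŷ)` on `(ŷ, b)`.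

Since `s → ∞` at `a`, `∫_a^x μ m = 1 / s(x)`, and so `V = h(ŷ) ξ - γ g` has
`V' = s M (h(ŷ) - h) + p ≥ p`. Moreover `L ξ = 1` and `L g = c` for `L = (σ²/2) ∂² + μ ∂`, so
`L V + γ c = h(ŷ)`. At `ŷ` this gives `V' = p` and `V'' = 0`, so the affine continuation `U` is
`C²`, and on `(ŷ, b)` the HJB operator applied to `U` equals `ψ - h(ŷ) < 0`. -/

section StateInterval

variable {a : ℝ} {b : EReal}

lemma isOpen_stInt : IsOpen (stInt a b) :=
  isOpen_Ioi.inter (isOpen_Iio.preimage continuous_coe_real_ereal)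

instance : (stInt a b).OrdConnected :=
  ⟨fun _ hx _ hy _ hz => ⟨hx.1.trans_le hz.1, (EReal.coe_le_coe_iff.2 hz.2).trans_lt hy.2⟩⟩

lemma uIcc_subset_stInt {x y : ℝ} (hx : x ∈ stInt a b) (hy : y ∈ stInt a b) :
    uIcc x y ⊆ stInt a b :=
  Set.OrdConnected.uIcc_subset inferInstance hx hy

lemma mem_stInt_of_le {x y : ℝ} (hx : x ∈ stInt a b) (hay : a < y) (hyx : y ≤ x) :
    y ∈ stInt a b :=
  ⟨hay, (EReal.coe_le_coe_iff.2 hyx).trans_lt hx.2⟩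

lemma Ioc_subset_stInt {x : ℝ} (hx : x ∈ stInt a b) : Ioc a x ⊆ stInt a b :=
  fun _ hu => mem_stInt_of_le hx hu.1 hu.2

lemma hasDerivAt_integral_of_continuousOn_stInt {f : ℝ → ℝ} (hf : ContinuousOn f (stInt a b))
    {x₀ x : ℝ} (hx₀ : x₀ ∈ stInt a b) (hx : x ∈ stInt a b) :
    HasDerivAt (fun t => ∫ v in x₀..t, f v) (f x) x :=
  intervalIntegral.integral_hasDerivAt_right
    ((hf.mono (uIcc_subset_stInt hx₀ hx)).intervalIntegrable)
    (hf.stronglyMeasurableAtFilter isOpen_stInt x hx)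
    (hf.continuousAt (isOpen_stInt.mem_nhds hx))

end StateInterval

section Primitives

variable {a x : ℝ}

lemma setIntegral_Ioo_eq_intervalIntegral {f : ℝ → ℝ} (hax : a ≤ x) :
    ∫ u in Ioo a x, f u = ∫ u in a..x, f u := by
  rw [intervalIntegral.integral_of_le hax, integral_Ioc_eq_integral_Ioo]

lemma hasDerivAt_setIntegral_Ioo {w : ℝ → ℝ} {S : Set ℝ} (hS : IsOpen S) (hw : ContinuousOn w S)
    (hx : x ∈ S) (hax : a < x) (hint : IntegrableOn w (Ioo a x)) :
    HasDerivAt (fun t => ∫ u in Ioo a t, w u) (w x) x := by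
  refine HasDerivAt.congr_of_eventuallyEq (intervalIntegral.integral_hasDerivAt_right
    ((intervalIntegrable_iff_integrableOn_Ioo_of_le hax.le).2 hint)
    (hw.stronglyMeasurableAtFilter hS x hx) (hw.continuousAt (hS.mem_nhds hx))) ?_
  filter_upwards [Ioi_mem_nhds hax] with t ht
  exact setIntegral_Ioo_eq_intervalIntegral (le_of_lt ht)

lemma exists_abs_le_of_tendsto_nhdsGT {f : ℝ → ℝ} {L : ℝ} (hf : ContinuousOn f (Ioc a x))
    (hL : Tendsto f (𝓝[>] a) (𝓝 L)) : ∃ K, ∀ u ∈ Ioo a x, |f u| ≤ K := by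
  have hext : ContinuousOn (Function.update f a L) (Icc a x) := by
    rw [continuousOn_update_iff, Icc_sdiff_left]
    exact ⟨hf, fun _ => hL.mono_left (nhdsWithin_mono _ Ioc_subset_Ioi_self)⟩
  obtain ⟨K, hK⟩ := isCompact_Icc.exists_bound_of_continuousOn hext
  refine ⟨K, fun u hu => ?_⟩
  simpa only [Function.update_of_ne hu.1.ne', Real.norm_eq_abs] using hK u (Ioo_subset_Icc_self hu)

lemma integrableOn_mul_of_abs_le {v m : ℝ → ℝ} {s : Set ℝ} {K : ℝ} (hs : MeasurableSet s)
    (hm : IntegrableOn m s) (hv : ContinuousOn v s) (hK : ∀ u ∈ s, |v u| ≤ K) :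
    IntegrableOn (fun u => v u * m u) s :=
  hm.bdd_mul (hv.aestronglyMeasurable hs) ((ae_restrict_iff' hs).2 (ae_of_all _ hK))

lemma integrableOn_Ioo_mul_of_tendsto {v m : ℝ → ℝ} {L : ℝ} (hm : IntegrableOn m (Ioo a x))
    (hv : ContinuousOn v (Ioc a x)) (hL : Tendsto v (𝓝[>] a) (𝓝 L)) :
    IntegrableOn (fun u => v u * m u) (Ioo a x) :=
  let ⟨_, hK⟩ := exists_abs_le_of_tendsto_nhdsGT hv hL
  integrableOn_mul_of_abs_le measurableSet_Ioo hm (hv.mono Ioo_subset_Ioc_self) hK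

lemma integrableOn_Ioo_mul_of_monotoneOn {v m : ℝ → ℝ} (hax : a < x)
    (hm : IntegrableOn m (Ioo a x)) (hv : ContinuousOn v (Ioc a x))
    (hv₀ : ∀ u ∈ Ioc a x, 0 ≤ v u) (hvmono : MonotoneOn v (Ioc a x)) :
    IntegrableOn (fun u => v u * m u) (Ioo a x) := by
  refine integrableOn_mul_of_abs_le (K := v x) measurableSet_Ioo hm (hv.mono Ioo_subset_Ioc_self)
    fun u hu => ?_
  rw [abs_of_nonneg (hv₀ u (Ioo_subset_Ioc_self hu))]
  exact hvmono (Ioo_subset_Ioc_self hu) (right_mem_Ioc.2 hax) hu.2.le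

end Primitives

lemma ConcaveOn.min_le_of_mem_Ioo {f : ℝ → ℝ} {y x t : ℝ} (hf : ConcaveOn ℝ (Ioc y x) f)
    (hcont : ContinuousWithinAt f (Ioi y) y) (ht : t ∈ Ioo y x) : min (f y) (f x) ≤ f t := by
  refine le_of_tendsto (hcont.tendsto.min tendsto_const_nhds) ?_
  filter_upwards [Ioo_mem_nhdsGT ht.1] with y' hy'
  refine hf.min_le_of_mem_segment ⟨hy'.1, (hy'.2.trans ht.2).le⟩ ⟨ht.1.trans ht.2, le_rfl⟩ ?_
  rw [segment_eq_Icc (hy'.2.trans ht.2).le]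
  exact ⟨hy'.2.le, ht.2.le⟩

lemma HasDerivAt.div_of_hasDerivAt_mul {N M : ℝ → ℝ} {w m x : ℝ} (hN : HasDerivAt N (w * m) x)
    (hM : HasDerivAt M m x) (hMx : M x ≠ 0) :
    HasDerivAt (fun t => N t / M t) (m * (w - N x / M x) / M x) x := by
  refine (hN.div hM hMx).congr_deriv ?_
  field_simp

section SmoothFit

variable {f g f' g' : ℝ → ℝ} {x y : ℝ}

lemma hasDerivAt_ite_le (hf : x ≤ y → HasDerivAt f (f' x) x) (hg : y ≤ x → HasDerivAt g (g' x) x)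
    (hfg : f y = g y) (hfg' : f' y = g' y) :
    HasDerivAt (fun t => if t ≤ y then f t else g t) (if x ≤ y then f' x else g' x) x := by
  rcases lt_trichotomy x y with hxy | rfl | hyx
  · rw [if_pos hxy.le]
    refine (hf hxy.le).congr_of_eventuallyEq ?_
    filter_upwards [Iio_mem_nhds hxy] with t ht using if_pos ht.le
  · rw [if_pos le_rfl]
    have hL : HasDerivWithinAt (fun t => if t ≤ x then f t else g t) (f' x) (Iic x) x :=
      (hf le_rfl).hasDerivWithinAt.congr (fun t ht => if_pos ht) (if_pos le_rfl)
    have hR : HasDerivWithinAt (fun t => if t ≤ x then f t else g t) (f' x) (Ici x) x := by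
      refine (hfg' ▸ hg le_rfl).hasDerivWithinAt.congr (fun t ht => ?_) (by rw [if_pos le_rfl, hfg])
      split_ifs with htx
      · rw [le_antisymm htx ht, hfg]
      · rfl
    simpa only [Iic_union_Ici, hasDerivWithinAt_univ] using hL.union hR
  · rw [if_neg hyx.not_ge]
    refine (hg hyx.le).congr_of_eventuallyEq ?_
    filter_upwards [Ioi_mem_nhds hyx] with t ht using if_neg (not_le.2 ht)

lemma continuousAt_ite_le (hf : x ≤ y → ContinuousAt f x) (hg : y ≤ x → ContinuousAt g x)
    (hfg : f y = g y) : ContinuousAt (fun t => if t ≤ y then f t else g t) x := by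
  rcases lt_trichotomy x y with hxy | rfl | hyx
  · refine (hf hxy.le).congr ?_
    filter_upwards [Iio_mem_nhds hxy] with t ht using (if_pos ht.le).symm
  · have hL : ContinuousWithinAt (fun t => if t ≤ x then f t else g t) (Iic x) x :=
      (hf le_rfl).continuousWithinAt.congr (fun t ht => if_pos ht) (if_pos le_rfl)
    have hR : ContinuousWithinAt (fun t => if t ≤ x then f t else g t) (Ici x) x := by
      refine (hg le_rfl).continuousWithinAt.congr (fun t ht => ?_) (by rw [if_pos le_rfl, hfg])
      split_ifs with htx
      · rw [le_antisymm htx ht, hfg]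
      · rfl
    simpa only [Iic_union_Ici, continuousWithinAt_univ] using hL.union hR
  · refine (hg hyx.le).congr ?_
    filter_upwards [Ioi_mem_nhds hyx] with t ht using (if_neg (not_le.2 ht)).symm

variable {S : Set ℝ} {f'' : ℝ → ℝ}

lemma contDiffOn_two_of_hasDerivAt (hS : IsOpen S) (hf : ∀ x ∈ S, HasDerivAt f (f' x) x)
    (hf' : ∀ x ∈ S, HasDerivAt f' (f'' x) x) (hf'' : ContinuousOn f'' S) :
    ContDiffOn ℝ 2 f S := by
  rw [show (2 : WithTop ℕ∞) = 1 + 1 from rfl, contDiffOn_succ_iff_deriv_of_isOpen hS]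
  refine ⟨fun x hx => (hf x hx).differentiableAt.differentiableWithinAt, by simp, ?_⟩
  refine ContDiffOn.congr ?_ fun x hx => (hf x hx).deriv
  rw [show (1 : WithTop ℕ∞) = 0 + 1 from rfl, contDiffOn_succ_iff_deriv_of_isOpen hS]
  refine ⟨fun x hx => (hf' x hx).differentiableAt.differentiableWithinAt, by simp, ?_⟩
  exact (contDiffOn_zero.2 hf'').congr fun x hx => (hf' x hx).deriv

lemma deriv_deriv_eq_of_hasDerivAt (hS : IsOpen S) (hf : ∀ x ∈ S, HasDerivAt f (f' x) x)
    (hf' : ∀ x ∈ S, HasDerivAt f' (f'' x) x) (hx : x ∈ S) : deriv (deriv f) x = f'' x := by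
  refine ((hf' x hx).congr_of_eventuallyEq ?_).deriv
  filter_upwards [hS.mem_nhds hx] with t ht using (hf t ht).deriv

lemma contDiffOn_two_ite_affine (hS : IsOpen S) {V V' V'' U : ℝ → ℝ} {p : ℝ}
    (hV : ∀ x ∈ S, x ≤ y → HasDerivAt V (V' x) x) (hV' : ∀ x ∈ S, x ≤ y → HasDerivAt V' (V'' x) x)
    (hV'' : ∀ x ∈ S, x ≤ y → ContinuousAt V'' x) (hy' : V' y = p) (hy'' : V'' y = 0)
    (hU : ∀ x, U x = if x ≤ y then V x else V y + p * (x - y)) :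
    ContDiffOn ℝ 2 U S ∧ ∀ x ∈ S,
      deriv U x = (if x ≤ y then V' x else p) ∧ deriv (deriv U) x = if x ≤ y then V'' x else 0 := by
  have hU' : ∀ x ∈ S, HasDerivAt U (if x ≤ y then V' x else p) x := fun x hx => by
    rw [funext hU]
    refine hasDerivAt_ite_le (g' := fun _ => p) (hV x hx) (fun _ => ?_) (by ring) hy'
    simpa using ((hasDerivAt_id x).sub_const y).const_mul p |>.const_add (V y)
  have hU'' : ∀ x ∈ S, HasDerivAt (fun t => if t ≤ y then V' t else p)
      (if x ≤ y then V'' x else 0) x := fun x hx =>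
    hasDerivAt_ite_le (g := fun _ => p) (g' := fun _ => 0) (hV' x hx)
      (fun _ => hasDerivAt_const x p) hy' hy''
  have hcont : ContinuousOn (fun x => if x ≤ y then V'' x else 0) S := fun x hx =>
    (continuousAt_ite_le (g := fun _ => 0) (hV'' x hx) (fun _ => continuousAt_const)
      hy'').continuousWithinAt
  exact ⟨contDiffOn_two_of_hasDerivAt hS hU' hU'' hcont, fun x hx =>
    ⟨(hU' x hx).deriv, deriv_deriv_eq_of_hasDerivAt hS hU' hU'' hx⟩⟩

end SmoothFit

structure IsRegularDiffusion (a : ℝ) (b : EReal) (μ σ : ℝ → ℝ) (x₀ : ℝ) : Prop where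
  x₀_mem : x₀ ∈ stInt a b
  continuousOn_μ : ContinuousOn μ (stInt a b)
  continuousOn_σ : ContinuousOn σ (stInt a b)
  sq_σ_pos : ∀ x ∈ stInt a b, 0 < σ x ^ 2
  integrableOn_mDen : ∀ x ∈ stInt a b, IntegrableOn (mDen μ σ x₀) (Ioo a x)

lemma sDen_pos {μ σ : ℝ → ℝ} {x₀ : ℝ} (x : ℝ) : 0 < sDen μ σ x₀ x := Real.exp_pos _

/-- `h` is `Cab (γ c + p μ) / Mab` by definition, so facts about the ratio `Cab w / Mab` apply
to it. -/
def Cab (μ σ c : ℝ → ℝ) (x₀ a x : ℝ) : ℝ :=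
  ∫ u in Ioo a x, c u * mDen μ σ x₀ u

namespace IsRegularDiffusion

variable {a : ℝ} {b : EReal} {μ σ c w : ℝ → ℝ} {x₀ x : ℝ}

lemma hasDerivAt_sDen (hD : IsRegularDiffusion a b μ σ x₀) (hx : x ∈ stInt a b) :
    HasDerivAt (sDen μ σ x₀) (-(2 * μ x / σ x ^ 2) * sDen μ σ x₀ x) x := by
  have hdrift : ContinuousOn (fun y => 2 * μ y / σ y ^ 2) (stInt a b) :=
    (continuousOn_const.mul hD.continuousOn_μ).div (hD.continuousOn_σ.pow 2)
      fun y hy => (hD.sq_σ_pos y hy).ne'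
  exact (hasDerivAt_integral_of_continuousOn_stInt hdrift hD.x₀_mem hx).neg.exp.congr_deriv
    (mul_comm _ _)

lemma continuousOn_sDen (hD : IsRegularDiffusion a b μ σ x₀) :
    ContinuousOn (sDen μ σ x₀) (stInt a b) := fun _ hx =>
  (hD.hasDerivAt_sDen hx).continuousAt.continuousWithinAt

lemma mDen_pos (hD : IsRegularDiffusion a b μ σ x₀) (hx : x ∈ stInt a b) : 0 < mDen μ σ x₀ x :=
  div_pos two_pos (mul_pos (hD.sq_σ_pos x hx) (sDen_pos x))

lemma continuousOn_mDen (hD : IsRegularDiffusion a b μ σ x₀) :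
    ContinuousOn (mDen μ σ x₀) (stInt a b) :=
  continuousOn_const.div ((hD.continuousOn_σ.pow 2).mul hD.continuousOn_sDen)
    fun x hx => (mul_pos (hD.sq_σ_pos x hx) (sDen_pos x)).ne'

lemma hasDerivAt_inv_sDen (hD : IsRegularDiffusion a b μ σ x₀) (hx : x ∈ stInt a b) :
    HasDerivAt (fun t => (sDen μ σ x₀ t)⁻¹) (μ x * mDen μ σ x₀ x) x := by
  refine ((hD.hasDerivAt_sDen hx).inv (sDen_pos x).ne').congr_deriv ?_
  have hs := (sDen_pos (μ := μ) (σ := σ) (x₀ := x₀) x).ne'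
  have hσ := (hD.sq_σ_pos x hx).ne'
  rw [mDen]
  field_simp

/-- That is, `(σ²/2) (W s)' + μ W s = w`: for `W = M[a,·]` and `W = Cab c` this gives `L ξ = 1`
and `L g = c`, where `L = (σ²/2) ∂² + μ ∂`. -/
lemma hasDerivAt_mul_sDen (hD : IsRegularDiffusion a b μ σ x₀) {W w : ℝ → ℝ}
    (hx : x ∈ stInt a b) (hW : HasDerivAt W (w x * mDen μ σ x₀ x) x) :
    HasDerivAt (fun t => W t * sDen μ σ x₀ t)
      (2 * (w x - μ x * (W x * sDen μ σ x₀ x)) / σ x ^ 2) x := by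
  refine (hW.mul (hD.hasDerivAt_sDen hx)).congr_deriv ?_
  have hs := (sDen_pos (μ := μ) (σ := σ) (x₀ := x₀) x).ne'
  have hσ := (hD.sq_σ_pos x hx).ne'
  rw [mDen]
  field_simp
  ring

lemma hasDerivAt_Mab (hD : IsRegularDiffusion a b μ σ x₀) (hx : x ∈ stInt a b) :
    HasDerivAt (Mab μ σ x₀ a) (mDen μ σ x₀ x) x :=
  hasDerivAt_setIntegral_Ioo isOpen_stInt hD.continuousOn_mDen hx hx.1 (hD.integrableOn_mDen x hx)

lemma Mab_pos (hD : IsRegularDiffusion a b μ σ x₀) (hx : x ∈ stInt a b) :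
    0 < Mab μ σ x₀ a x := by
  rw [Mab, setIntegral_Ioo_eq_intervalIntegral hx.1.le]
  exact intervalIntegral.intervalIntegral_pos_of_pos_on
    ((intervalIntegrable_iff_integrableOn_Ioo_of_le hx.1.le).2 (hD.integrableOn_mDen x hx))
    (fun u hu => hD.mDen_pos (mem_stInt_of_le hx hu.1 hu.2.le)) hx.1

lemma integral_μ_mul_mDen_eq_inv_sDen (hD : IsRegularDiffusion a b μ σ x₀)
    (hsa : Tendsto (sDen μ σ x₀) (𝓝[>] a) atTop) (hx : x ∈ stInt a b)
    (hint : IntegrableOn (fun u => μ u * mDen μ σ x₀ u) (Ioo a x)) :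
    ∫ u in Ioo a x, μ u * mDen μ σ x₀ u = (sDen μ σ x₀ x)⁻¹ := by
  rw [setIntegral_Ioo_eq_intervalIntegral hx.1.le,
    intervalIntegral.integral_eq_sub_of_hasDerivAt_of_tendsto hx.1
      (fun t ht => hD.hasDerivAt_inv_sDen (mem_stInt_of_le hx ht.1 ht.2.le))
      ((intervalIntegrable_iff_integrableOn_Ioo_of_le hx.1.le).2 hint) hsa.inv_tendsto_atTop
      ((hD.hasDerivAt_inv_sDen hx).continuousAt.tendsto.mono_left nhdsWithin_le_nhds), sub_zero]

lemma hasDerivAt_Cab (hD : IsRegularDiffusion a b μ σ x₀) (hw : ContinuousOn w (stInt a b))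
    (hx : x ∈ stInt a b) (hwm : IntegrableOn (fun u => w u * mDen μ σ x₀ u) (Ioo a x)) :
    HasDerivAt (Cab μ σ w x₀ a) (w x * mDen μ σ x₀ x) x :=
  hasDerivAt_setIntegral_Ioo isOpen_stInt (hw.mul hD.continuousOn_mDen) hx hx.1 hwm

lemma hasDerivAt_Cab_div_Mab (hD : IsRegularDiffusion a b μ σ x₀) (hw : ContinuousOn w (stInt a b))
    (hwm : ∀ x ∈ stInt a b, IntegrableOn (fun u => w u * mDen μ σ x₀ u) (Ioo a x))
    (hx : x ∈ stInt a b) :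
    HasDerivAt (fun t => Cab μ σ w x₀ a t / Mab μ σ x₀ a t)
      (mDen μ σ x₀ x * (w x - Cab μ σ w x₀ a x / Mab μ σ x₀ a x) / Mab μ σ x₀ a x) x :=
  (hD.hasDerivAt_Cab hw hx (hwm x hx)).div_of_hasDerivAt_mul (hD.hasDerivAt_Mab hx)
    (hD.Mab_pos hx).ne'

lemma eq_Cab_div_Mab_of_isMaxOn (hD : IsRegularDiffusion a b μ σ x₀)
    (hw : ContinuousOn w (stInt a b))
    (hwm : ∀ x ∈ stInt a b, IntegrableOn (fun u => w u * mDen μ σ x₀ u) (Ioo a x))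
    (hx : x ∈ stInt a b)
    (hmax : IsMaxOn (fun t => Cab μ σ w x₀ a t / Mab μ σ x₀ a t) (stInt a b) x) :
    w x = Cab μ σ w x₀ a x / Mab μ σ x₀ a x := by
  have h := (hmax.isLocalMax (isOpen_stInt.mem_nhds hx)).hasDerivAt_eq_zero
    (hD.hasDerivAt_Cab_div_Mab hw hwm hx)
  simpa only [div_eq_zero_iff, mul_eq_zero, (hD.mDen_pos hx).ne', (hD.Mab_pos hx).ne', sub_eq_zero,
    false_or, or_false] using h

lemma Cab_div_Mab_le_of_le (hD : IsRegularDiffusion a b μ σ x₀) (hw : ContinuousOn w (stInt a b))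
    (hwm : ∀ x ∈ stInt a b, IntegrableOn (fun u => w u * mDen μ σ x₀ u) (Ioo a x))
    {y z : ℝ} (hy : y ∈ stInt a b) (hz : z ∈ stInt a b) (hyz : y ≤ z)
    (hle : ∀ t ∈ Ioo y z, Cab μ σ w x₀ a t / Mab μ σ x₀ a t ≤ w t) :
    Cab μ σ w x₀ a y / Mab μ σ x₀ a y ≤ Cab μ σ w x₀ a z / Mab μ σ x₀ a z := by
  have hsub : Icc y z ⊆ stInt a b := by
    simpa only [uIcc_of_le hyz] using uIcc_subset_stInt hy hz
  have hderiv t (ht : t ∈ Icc y z) := hD.hasDerivAt_Cab_div_Mab hw hwm (hsub ht)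
  refine monotoneOn_of_deriv_nonneg (convex_Icc y z)
    (fun t ht => (hderiv t ht).continuousAt.continuousWithinAt)
    (fun t ht => (hderiv t (interior_subset ht)).differentiableAt.differentiableWithinAt)
    (fun t ht => ?_) (left_mem_Icc.2 hyz) (right_mem_Icc.2 hyz) hyz
  rw [interior_Icc] at ht
  have htS := hsub (Ioo_subset_Icc_self ht)
  rw [(hderiv t (Ioo_subset_Icc_self ht)).deriv]
  exact div_nonneg (mul_nonneg (hD.mDen_pos htS).le (sub_nonneg.2 (hle t ht))) (hD.Mab_pos htS).le

lemma lt_Cab_div_Mab_of_lt (hD : IsRegularDiffusion a b μ σ x₀) (hw : ContinuousOn w (stInt a b))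
    (hwm : ∀ x ∈ stInt a b, IntegrableOn (fun u => w u * mDen μ σ x₀ u) (Ioo a x))
    {xhat0 y : ℝ} (hxhat0 : xhat0 ∈ stInt a b) (hwmono : MonotoneOn w (Ioo a xhat0))
    (hwconc : ConcaveOn ℝ {x : ℝ | xhat0 < x ∧ (x : EReal) < b} w) (hy : y ∈ stInt a b)
    (hmax : ∀ x ∈ stInt a b, x ≠ y →
      Cab μ σ w x₀ a x / Mab μ σ x₀ a x < Cab μ σ w x₀ a y / Mab μ σ x₀ a y)
    (hx : x ∈ stInt a b) (hyx : y < x) :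
    w x < Cab μ σ w x₀ a y / Mab μ σ x₀ a y := by
  set H := Cab μ σ w x₀ a y / Mab μ σ x₀ a y
  have hwy : w y = H := hD.eq_Cab_div_Mab_of_isMaxOn hw hwm hy <| isMaxOn_iff.2 fun t ht =>
    (eq_or_ne t y).elim (fun hty => hty ▸ le_rfl) fun hty => (hmax t ht hty).le
  have no_plateau : ∀ z ∈ stInt a b, y < z → ¬ ∀ t ∈ Ioo y z, H ≤ w t := fun z hz hyz hle =>
    (hmax z hz hyz.ne').not_ge <| hD.Cab_div_Mab_le_of_le hw hwm hy hz hyz.le fun t ht =>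
      (hmax t (mem_stInt_of_le hz (hy.1.trans ht.1) ht.2.le) ht.1.ne').le.trans (hle t ht)
  have hxhat0y : xhat0 ≤ y := by
    by_contra! hyxhat0
    exact no_plateau xhat0 hxhat0 hyxhat0 fun t ht =>
      hwy ▸ hwmono ⟨hy.1, hyxhat0⟩ ⟨hy.1.trans ht.1, ht.2⟩ ht.1.le
  by_contra! hHx
  refine no_plateau x hx hyx fun t ht => ?_
  have hconc : ConcaveOn ℝ (Ioc y x) w :=
    hwconc.subset (fun u hu =>
      ⟨hxhat0y.trans_lt hu.1, (mem_stInt_of_le hx (hy.1.trans hu.1) hu.2).2⟩) (convex_Ioc y x)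
  have hcont : ContinuousWithinAt w (Ioi y) y :=
    (hw.continuousAt (isOpen_stInt.mem_nhds hy)).continuousWithinAt
  simpa only [hwy, min_eq_left hHx] using hconc.min_le_of_mem_Ioo hcont ht

lemma Cab_add_eq (hD : IsRegularDiffusion a b μ σ x₀) (hsa : Tendsto (sDen μ σ x₀) (𝓝[>] a) atTop)
    {p γ : ℝ} (hx : x ∈ stInt a b)
    (hcm : IntegrableOn (fun u => c u * mDen μ σ x₀ u) (Ioo a x))
    (hμm : IntegrableOn (fun u => μ u * mDen μ σ x₀ u) (Ioo a x)) :
    Cab μ σ (fun u => γ * c u + p * μ u) x₀ a x = γ * Cab μ σ c x₀ a x + p * (sDen μ σ x₀ x)⁻¹ := by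
  rw [← hD.integral_μ_mul_mDen_eq_inv_sDen hsa hx hμm, Cab, Cab, ← integral_const_mul,
    ← integral_const_mul, ← integral_add (hcm.const_mul γ) (hμm.const_mul p)]
  congr 1 with u
  ring

lemma continuousOn_Mab (hD : IsRegularDiffusion a b μ σ x₀) :
    ContinuousOn (Mab μ σ x₀ a) (stInt a b) := fun _ hx =>
  (hD.hasDerivAt_Mab hx).continuousAt.continuousWithinAt

lemma continuousOn_Cab (hD : IsRegularDiffusion a b μ σ x₀) (hc : ContinuousOn c (stInt a b))
    (hcm : ∀ x ∈ stInt a b, IntegrableOn (fun u => c u * mDen μ σ x₀ u) (Ioo a x)) :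
    ContinuousOn (Cab μ σ c x₀ a) (stInt a b) := fun x hx =>
  (hD.hasDerivAt_Cab hc hx (hcm x hx)).continuousAt.continuousWithinAt

lemma hasDerivAt_value (hD : IsRegularDiffusion a b μ σ x₀) (hc : ContinuousOn c (stInt a b))
    (hcm : ∀ x ∈ stInt a b, IntegrableOn (fun u => c u * mDen μ σ x₀ u) (Ioo a x)) (H γ : ℝ)
    (hx : x ∈ stInt a b) :
    HasDerivAt (fun t => H * xiF μ σ x₀ a t - γ * gF μ σ c x₀ a t)
      ((H * Mab μ σ x₀ a x - γ * Cab μ σ c x₀ a x) * sDen μ σ x₀ x) x := by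
  have hξ := hasDerivAt_integral_of_continuousOn_stInt
    (hD.continuousOn_Mab.mul hD.continuousOn_sDen) hD.x₀_mem hx
  have hg := hasDerivAt_integral_of_continuousOn_stInt
    ((hD.continuousOn_Cab hc hcm).mul hD.continuousOn_sDen) hD.x₀_mem hx
  exact ((hξ.const_mul H).sub (hg.const_mul γ)).congr_deriv (by simp only [Pi.mul_apply]; ring)

lemma hasDerivAt_value_deriv (hD : IsRegularDiffusion a b μ σ x₀) (hc : ContinuousOn c (stInt a b))
    (hcm : ∀ x ∈ stInt a b, IntegrableOn (fun u => c u * mDen μ σ x₀ u) (Ioo a x)) (H γ : ℝ)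
    (hx : x ∈ stInt a b) :
    HasDerivAt (fun t => (H * Mab μ σ x₀ a t - γ * Cab μ σ c x₀ a t) * sDen μ σ x₀ t)
      (2 * (H - γ * c x - μ x * ((H * Mab μ σ x₀ a x - γ * Cab μ σ c x₀ a x) * sDen μ σ x₀ x)) /
        σ x ^ 2) x :=
  hD.hasDerivAt_mul_sDen (w := fun t => H - γ * c t) hx <|
    ((hD.hasDerivAt_Mab hx).const_mul H).sub ((hD.hasDerivAt_Cab hc hx (hcm x hx)).const_mul γ)
      |>.congr_deriv (by ring)

lemma value_deriv_eq (hD : IsRegularDiffusion a b μ σ x₀)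
    (hsa : Tendsto (sDen μ σ x₀) (𝓝[>] a) atTop) {p γ : ℝ} (hx : x ∈ stInt a b)
    (hcm : IntegrableOn (fun u => c u * mDen μ σ x₀ u) (Ioo a x))
    (hμm : IntegrableOn (fun u => μ u * mDen μ σ x₀ u) (Ioo a x)) (H : ℝ) :
    (H * Mab μ σ x₀ a x - γ * Cab μ σ c x₀ a x) * sDen μ σ x₀ x =
      sDen μ σ x₀ x * Mab μ σ x₀ a x * (H - hF μ σ c x₀ a p γ x) + p := by
  have hM := (hD.Mab_pos hx).ne'
  have hs := (sDen_pos (μ := μ) (σ := σ) (x₀ := x₀) x).ne'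
  have hh : hF μ σ c x₀ a p γ x = Cab μ σ (fun u => γ * c u + p * μ u) x₀ a x / Mab μ σ x₀ a x :=
    rfl
  rw [hh, hD.Cab_add_eq hsa hx hcm hμm]
  field_simp
  ring

lemma value_smooth_fit (hD : IsRegularDiffusion a b μ σ x₀)
    (hsa : Tendsto (sDen μ σ x₀) (𝓝[>] a) atTop) (hc : ContinuousOn c (stInt a b))
    (hcm : ∀ x ∈ stInt a b, IntegrableOn (fun u => c u * mDen μ σ x₀ u) (Ioo a x))
    (hμm : ∀ x ∈ stInt a b, IntegrableOn (fun u => μ u * mDen μ σ x₀ u) (Ioo a x))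
    {p γ y : ℝ} (hy : y ∈ stInt a b) (hmax : IsMaxOn (hF μ σ c x₀ a p γ) (stInt a b) y)
    (hwy : γ * c y + p * μ y = hF μ σ c x₀ a p γ y) {U : ℝ → ℝ}
    (hU : ∀ x, U x =
      if x ≤ y then hF μ σ c x₀ a p γ y * xiF μ σ x₀ a x - γ * gF μ σ c x₀ a x
      else (hF μ σ c x₀ a p γ y * xiF μ σ x₀ a y - γ * gF μ σ c x₀ a y) + p * (x - y)) :
    ContDiffOn ℝ 2 U (stInt a b) ∧ ∀ x ∈ stInt a b,
      (x ≤ y → σ x ^ 2 / 2 * deriv (deriv U) x + μ x * deriv U x + γ * c x -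
        hF μ σ c x₀ a p γ y = 0 ∧ p ≤ deriv U x) ∧
      (y < x → deriv U x = p ∧ deriv (deriv U) x = 0) := by
  set H := hF μ σ c x₀ a p γ y
  set V' := fun t => (H * Mab μ σ x₀ a t - γ * Cab μ σ c x₀ a t) * sDen μ σ x₀ t
  set V'' := fun x => 2 * (H - γ * c x - μ x * V' x) / σ x ^ 2
  have hV'y : V' y = p := by
    have h0 : H - hF μ σ c x₀ a p γ y = 0 := sub_self H
    rw [show V' y = _ from hD.value_deriv_eq hsa hy (hcm y hy) (hμm y hy) H, h0, mul_zero, zero_add]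
  have hV''y : V'' y = 0 := by
    simp only [V'', hV'y, ← hwy]
    ring
  have hV''cont : ContinuousOn V'' (stInt a b) := by
    have hV'cont : ContinuousOn V' (stInt a b) := fun x hx =>
      (hD.hasDerivAt_value_deriv hc hcm H γ hx).continuousAt.continuousWithinAt
    exact (continuousOn_const.mul ((continuousOn_const.sub (continuousOn_const.mul hc)).sub
      (hD.continuousOn_μ.mul hV'cont))).div (hD.continuousOn_σ.pow 2)
      fun x hx => (hD.sq_σ_pos x hx).ne'
  obtain ⟨hC2, hdU⟩ := contDiffOn_two_ite_affine isOpen_stInt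
    (fun x hx _ => hD.hasDerivAt_value hc hcm H γ hx)
    (fun x hx _ => hD.hasDerivAt_value_deriv hc hcm H γ hx)
    (fun x hx _ => hV''cont.continuousAt (isOpen_stInt.mem_nhds hx)) hV'y hV''y hU
  refine ⟨hC2, fun x hx => ⟨fun hxy => ?_, fun hyx => ?_⟩⟩
  · rw [(hdU x hx).1, (hdU x hx).2, if_pos hxy, if_pos hxy]
    refine ⟨?_, ?_⟩
    · have hσx : σ x ≠ 0 := fun h => (hD.sq_σ_pos x hx).ne' (by simp [h])
      field_simp
      ring
    · have hVge : 0 ≤ sDen μ σ x₀ x * Mab μ σ x₀ a x * (H - hF μ σ c x₀ a p γ x) :=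
        mul_nonneg (mul_nonneg (sDen_pos x).le (hD.Mab_pos hx).le) (sub_nonneg.2 (hmax hx))
      rw [hD.value_deriv_eq hsa hx (hcm x hx) (hμm x hx) H]
      linarith
  · rw [(hdU x hx).1, (hdU x hx).2, if_neg hyx.not_ge, if_neg hyx.not_ge]
    exact ⟨rfl, rfl⟩

lemma value_solves_hjb (hD : IsRegularDiffusion a b μ σ x₀)
    (hsa : Tendsto (sDen μ σ x₀) (𝓝[>] a) atTop) (hc : ContinuousOn c (stInt a b))
    (hcm : ∀ x ∈ stInt a b, IntegrableOn (fun u => c u * mDen μ σ x₀ u) (Ioo a x))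
    (hμm : ∀ x ∈ stInt a b, IntegrableOn (fun u => μ u * mDen μ σ x₀ u) (Ioo a x))
    {p γ y : ℝ} (hy : y ∈ stInt a b) (hmax : IsMaxOn (hF μ σ c x₀ a p γ) (stInt a b) y)
    (hwy : γ * c y + p * μ y = hF μ σ c x₀ a p γ y)
    (hwlt : ∀ x ∈ stInt a b, y < x → γ * c x + p * μ x < hF μ σ c x₀ a p γ y) {U : ℝ → ℝ}
    (hU : ∀ x, U x =
      if x ≤ y then hF μ σ c x₀ a p γ y * xiF μ σ x₀ a x - γ * gF μ σ c x₀ a x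
      else (hF μ σ c x₀ a p γ y * xiF μ σ x₀ a y - γ * gF μ σ c x₀ a y) + p * (x - y)) :
    ContDiffOn ℝ 2 U (stInt a b) ∧
    (∀ x ∈ stInt a b,
      max ((σ x) ^ 2 / 2 * deriv (deriv U) x + μ x * deriv U x + γ * c x -
          hF μ σ c x₀ a p γ y) (-(deriv U x) + p) = 0) ∧
    (∀ x : ℝ, a < x → x < y →
      (σ x) ^ 2 / 2 * deriv (deriv U) x + μ x * deriv U x + γ * c x -
        hF μ σ c x₀ a p γ y = 0 ∧ p ≤ deriv U x) ∧
    (∀ x : ℝ, y < x → (x : EReal) < b →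
      deriv U x = p ∧
      (σ x) ^ 2 / 2 * deriv (deriv U) x + μ x * deriv U x + γ * c x -
        hF μ σ c x₀ a p γ y < 0) := by
  obtain ⟨hC2, hdU⟩ := hD.value_smooth_fit hsa hc hcm hμm hy hmax hwy hU
  have habove x (hx : x ∈ stInt a b) (hyx : y < x) : deriv U x = p ∧
      σ x ^ 2 / 2 * deriv (deriv U) x + μ x * deriv U x + γ * c x - hF μ σ c x₀ a p γ y < 0 := by
    rw [((hdU x hx).2 hyx).1, ((hdU x hx).2 hyx).2]
    exact ⟨rfl, by linarith [hwlt x hx hyx]⟩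
  refine ⟨hC2, fun x hx => ?_, fun x hax hxy => (hdU x (mem_stInt_of_le hy hax hxy.le)).1 hxy.le,
    fun x hyx hxb => habove x ⟨hy.1.trans hyx, hxb⟩ hyx⟩
  rcases le_or_gt x y with hxy | hyx
  · obtain ⟨hL, hp⟩ := (hdU x hx).1 hxy
    rw [hL]
    exact max_eq_left (by linarith)
  · obtain ⟨hp, hL⟩ := habove x hx hyx
    rw [hp] at hL ⊢
    rw [neg_add_cancel]
    exact max_eq_right hL.le

end IsRegularDiffusion

theorem statement18_general (a : ℝ) (b : EReal)
    (μ σ : ℝ → ℝ) (x₀ : ℝ) (hx₀ : x₀ ∈ stInt a b)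
    (hμcont : ContinuousOn μ (stInt a b)) (hσcont : ContinuousOn σ (stInt a b))
    (hσpos : ∀ x ∈ stInt a b, 0 < (σ x) ^ 2)
    (hMfin : ∀ x ∈ stInt a b, IntegrableOn (mDen μ σ x₀) (Set.Ioo a x))
    (hsa : Tendsto (sDen μ σ x₀) (𝓝[>] a) atTop)
    (μa : ℝ) (hμa : Tendsto μ (𝓝[>] a) (𝓝 μa))
    (c : ℝ → ℝ) (hccont : ContinuousOn c (stInt a b))
    (hcnn : ∀ x ∈ stInt a b, 0 ≤ c x) (hcmono : MonotoneOn c (stInt a b))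
    (xhat0 : ℝ) (hxhat0 : xhat0 ∈ stInt a b)
    (hμmono : StrictMonoOn μ (Set.Ioo a xhat0))
    (hμconc : ConcaveOn ℝ {x : ℝ | xhat0 < x ∧ (x : EReal) < b} μ)
    (hcconc : ConcaveOn ℝ {x : ℝ | xhat0 < x ∧ (x : EReal) < b} c)
    (p γ : ℝ) (hp : 0 < p) (hγ : 0 < γ)
    (yh : ℝ) (hyh : yh ∈ stInt a b)
    (hymax : ∀ x ∈ stInt a b, x ≠ yh → hF μ σ c x₀ a p γ x < hF μ σ c x₀ a p γ yh)
    (U : ℝ → ℝ)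
    (hU : ∀ x, U x =
      if x ≤ yh then hF μ σ c x₀ a p γ yh * xiF μ σ x₀ a x - γ * gF μ σ c x₀ a x
      else (hF μ σ c x₀ a p γ yh * xiF μ σ x₀ a yh - γ * gF μ σ c x₀ a yh) + p * (x - yh)) :
    ContDiffOn ℝ 2 U (stInt a b) ∧
    (∀ x ∈ stInt a b,
      max ((σ x) ^ 2 / 2 * deriv (deriv U) x + μ x * deriv U x + γ * c x -
          hF μ σ c x₀ a p γ yh) (-(deriv U x) + p) = 0) ∧
    (∀ x : ℝ, a < x → x < yh →
      (σ x) ^ 2 / 2 * deriv (deriv U) x + μ x * deriv U x + γ * c x -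
        hF μ σ c x₀ a p γ yh = 0 ∧ p ≤ deriv U x) ∧
    (∀ x : ℝ, yh < x → (x : EReal) < b →
      deriv U x = p ∧
      (σ x) ^ 2 / 2 * deriv (deriv U) x + μ x * deriv U x + γ * c x -
        hF μ σ c x₀ a p γ yh < 0) := by
  have hD : IsRegularDiffusion a b μ σ x₀ := ⟨hx₀, hμcont, hσcont, hσpos, hMfin⟩
  have hcm x (hx : x ∈ stInt a b) : IntegrableOn (fun u => c u * mDen μ σ x₀ u) (Ioo a x) :=
    integrableOn_Ioo_mul_of_monotoneOn hx.1 (hMfin x hx) (hccont.mono (Ioc_subset_stInt hx))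
      (fun u hu => hcnn u (Ioc_subset_stInt hx hu)) (hcmono.mono (Ioc_subset_stInt hx))
  have hμm x (hx : x ∈ stInt a b) : IntegrableOn (fun u => μ u * mDen μ σ x₀ u) (Ioo a x) :=
    integrableOn_Ioo_mul_of_tendsto (hMfin x hx) (hμcont.mono (Ioc_subset_stInt hx)) hμa
  have hwm x (hx : x ∈ stInt a b) :
      IntegrableOn (fun u => (γ * c u + p * μ u) * mDen μ σ x₀ u) (Ioo a x) :=
    (((hcm x hx).const_mul γ).add ((hμm x hx).const_mul p)).congr
      (ae_of_all _ fun u => by simp only [Pi.add_apply]; ring)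
  have hw : ContinuousOn (fun u => γ * c u + p * μ u) (stInt a b) :=
    (continuousOn_const.mul hccont).add (continuousOn_const.mul hμcont)
  have hmax : IsMaxOn (hF μ σ c x₀ a p γ) (stInt a b) yh := isMaxOn_iff.2 fun x hx =>
    (eq_or_ne x yh).elim (fun h => h ▸ le_rfl) fun h => (hymax x hx h).le
  have hwlt x (hx : x ∈ stInt a b) (hyx : yh < x) : γ * c x + p * μ x < hF μ σ c x₀ a p γ yh :=
    hD.lt_Cab_div_Mab_of_lt hw hwm hxhat0
      (((monotone_mul_left_of_nonneg hγ.le).comp_monotoneOn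
        (hcmono.mono (Ioo_subset_Ioc_self.trans (Ioc_subset_stInt hxhat0)))).add
        ((monotone_mul_left_of_nonneg hp.le).comp_monotoneOn hμmono.monotoneOn))
      ((hcconc.smul hγ.le).add (hμconc.smul hp.le)) hyh hymax hx hyx
  exact hD.value_solves_hjb hsa hccont hcm hμm hyh hmax
    (hD.eq_Cab_div_Mab_of_isMaxOn hw hwm hyh hmax) hwlt hU

theorem statement18    (a : ℝ) (b : EReal) (hab : (a : EReal) < b)
    (μ σ : ℝ → ℝ) (x₀ : ℝ) (hx₀ : x₀ ∈ stInt a b)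
    (hμcont : ContinuousOn μ (stInt a b)) (hσcont : ContinuousOn σ (stInt a b))
    (hσpos : ∀ x ∈ stInt a b, 0 < (σ x) ^ 2)
    (hMfin : ∀ x ∈ stInt a b, IntegrableOn (mDen μ σ x₀) (Set.Ioo a x))
    (hsa : Tendsto (sDen μ σ x₀) (𝓝[>] a) atTop)
    (hsMb : Tendsto (fun x => sDen μ σ x₀ x * Mab μ σ x₀ a x) (atB b) atTop)
    (hbnat : Tendsto (xiF μ σ x₀ a) (atB b) atTop)
    (μa : ℝ) (hμa : Tendsto μ (𝓝[>] a) (𝓝 μa))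
    (c : ℝ → ℝ) (hccont : ContinuousOn c (stInt a b))
    (hcnn : ∀ x ∈ stInt a b, 0 ≤ c x) (hcmono : MonotoneOn c (stInt a b))
    (ca cb : ℝ) (hca : Tendsto c (𝓝[>] a) (𝓝 ca)) (hcb : Tendsto c (atB b) (𝓝 cb))
    (hca0 : 0 ≤ ca) (hcacb : ca < cb)
    (xhat0 : ℝ) (hxhat0 : xhat0 ∈ stInt a b)
    (hμmono : StrictMonoOn μ (Set.Ioo a xhat0))
    (hμconc : ConcaveOn ℝ {x : ℝ | xhat0 < x ∧ (x : EReal) < b} μ)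
    (hcconc : ConcaveOn ℝ {x : ℝ | xhat0 < x ∧ (x : EReal) < b} c)
    (p γ : ℝ) (hp : 0 < p) (hγ : 0 < γ)
    (hint : ∃ xt ∈ stInt a b, γ * cbar μ σ c x₀ a b cb < hF μ σ c x₀ a p γ xt)
    (yh : ℝ) (hyh : yh ∈ stInt a b)
    (hymax : ∀ x ∈ stInt a b, x ≠ yh → hF μ σ c x₀ a p γ x < hF μ σ c x₀ a p γ yh)
    (U : ℝ → ℝ)
    (hU : ∀ x, U x =
      if x ≤ yh then hF μ σ c x₀ a p γ yh * xiF μ σ x₀ a x - γ * gF μ σ c x₀ a x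
      else (hF μ σ c x₀ a p γ yh * xiF μ σ x₀ a yh - γ * gF μ σ c x₀ a yh) + p * (x - yh)) :
    ContDiffOn ℝ 2 U (stInt a b) ∧
    (∀ x ∈ stInt a b,
      max ((σ x) ^ 2 / 2 * deriv (deriv U) x + μ x * deriv U x + γ * c x -
          hF μ σ c x₀ a p γ yh) (-(deriv U x) + p) = 0) ∧
    (∀ x : ℝ, a < x → x < yh →
      (σ x) ^ 2 / 2 * deriv (deriv U) x + μ x * deriv U x + γ * c x -
        hF μ σ c x₀ a p γ yh = 0 ∧ p ≤ deriv U x) ∧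
    (∀ x : ℝ, yh < x → (x : EReal) < b →
      deriv U x = p ∧
      (σ x) ^ 2 / 2 * deriv (deriv U) x + μ x * deriv U x + γ * c x -
        hF μ σ c x₀ a p γ yh < 0) :=
  statement18_general a b μ σ x₀ hx₀ hμcont hσcont hσpos hMfin hsa μa hμa c hccont hcnn hcmono xhat0
    hxhat0 hμmono hμconc hcconc p γ hp hγ yh hyh hymax U hU
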